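/- If an M weight-bounded linear weighted graph G is realizable, then there exists a time-stamping modulo M that weakly satisfies G. -/
import Mathlib


open Finset

/-- A weighted constraint edge: `ts tgt - ts src ◁ wt` where ◁ is `<` if `strict` else `≤`. -/
structure WEdge where
  src : ℕ
  strict : Bool
  wt : ℤ
  tgt : ℕ
deriving DecidableEq

/-- `ts` satisfies the constraint of edge `e`. -/
def satEdge (ts : ℕ → ℝ) (e : WEdge) : Prop :=
  if e.strict then ts e.tgt - ts e.src < (e.wt : ℝ) else ts e.tgt - ts e.src ≤ (e.wt : ℝ)

/-- `ts` realizes the linear weighted graph on vertices `{1,…,n}` with edge set `E`: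
monotone w.r.t. the linear order and all difference constraints hold. -/
def Realizes (n : ℕ) (E : Finset WEdge) (ts : ℕ → ℝ) : Prop :=
  (∀ u v : ℕ, 1 ≤ u → u ≤ v → v ≤ n → ts u ≤ ts v) ∧ ∀ e ∈ E, satEdge ts e

/-- Integer parts of consecutive time-stamps differ by at least 0 and at most `M - 1`. -/
def SlowlyMonotone (M : ℤ) (n : ℕ) (ts : ℕ → ℝ) : Prop :=
  ∀ i : ℕ, 1 ≤ i → i < n → 0 ≤ ⌊ts (i + 1)⌋ - ⌊ts i⌋ ∧ ⌊ts (i + 1)⌋ - ⌊ts i⌋ ≤ M - 1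

/-- All edges of the graph have endpoints in `{1,…,n}`. -/
def InGraph (n : ℕ) (E : Finset WEdge) : Prop :=
  ∀ e ∈ E, 1 ≤ e.src ∧ e.src ≤ n ∧ 1 ≤ e.tgt ∧ e.tgt ≤ n

/-- `M` weight-bounded: all weights have absolute value at most `M - 1`. -/
def WtBounded (M : ℤ) (E : Finset WEdge) : Prop := ∀ e ∈ E, |e.wt| ≤ M - 1

/-- `dtsm(u,v) = (tsm v - tsm u) mod M`. -/
def dtsm (M : ℤ) (tsm : ℕ → ℤ) (u v : ℕ) : ℤ := (tsm v - tsm u) % M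

/-- `dtsm⁺(u,v)`, for `u ≤ v`: the cumulative sum of consecutive `dtsm`'s, capped at `M`. -/
def dtsmP (M : ℤ) (tsm : ℕ → ℤ) (u v : ℕ) : ℤ :=
  min M (∑ i ∈ Finset.Ico u v, dtsm M tsm i (i + 1))

/-- Antisymmetric extension of `dtsm⁺` to arbitrary pairs. -/
def dtsmE (M : ℤ) (tsm : ℕ → ℤ) (u v : ℕ) : ℤ :=
  if u ≤ v then dtsmP M tsm u v else - dtsmP M tsm v u

/-- `(u,v)` is `tsm`-big. -/
def TsmBig (M : ℤ) (tsm : ℕ → ℤ) (u v : ℕ) : Prop :=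
  ∃ w1 w2 : ℕ, u ≤ w1 ∧ w1 < w2 ∧ w2 ≤ v ∧ M ≤ dtsm M tsm u w1 + dtsm M tsm w1 w2

/-- `tsm` is a time-stamping modulo `M` on vertices `{1,…,n}`. -/
def TSM (M : ℤ) (n : ℕ) (tsm : ℕ → ℤ) : Prop :=
  ∀ v, 1 ≤ v → v ≤ n → 0 ≤ tsm v ∧ tsm v < M

/-- `tsm` weakly satisfies the graph (forward/backward conditions). -/
def WeaklySat (M : ℤ) (E : Finset WEdge) (tsm : ℕ → ℤ) : Prop :=
  ∀ e ∈ E,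
    (e.src ≤ e.tgt → ¬ TsmBig M tsm e.src e.tgt ∧ dtsm M tsm e.src e.tgt ≤ e.wt) ∧
    (e.tgt < e.src → TsmBig M tsm e.tgt e.src ∨ - e.wt ≤ dtsm M tsm e.tgt e.src)

/-- `(u,v) ∈ geqFr`: fractional part of `ts u` must be ≥ that of `ts v`. -/
def geqFr (M : ℤ) (tsm : ℕ → ℤ) (E : Finset WEdge) (u v : ℕ) : Prop :=
  (∃ e ∈ E, e.src = u ∧ e.tgt = v ∧ dtsmE M tsm u v = e.wt) ∨
  (v + 1 = u ∧ dtsmE M tsm u v = 0)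

/-- `(u,v) ∈ gtFr`: fractional part of `ts u` must be > that of `ts v`. -/
def gtFr (M : ℤ) (tsm : ℕ → ℤ) (E : Finset WEdge) (u v : ℕ) : Prop :=
  ∃ e ∈ E, e.strict = true ∧ e.src = u ∧ e.tgt = v ∧ dtsmE M tsm u v = e.wt

open Classical in
/-- Number of `gtFr` edges used by the path `p 0, p 1, …, p k`. -/
noncomputable def gtCount (M : ℤ) (tsm : ℕ → ℤ) (E : Finset WEdge) (k : ℕ) (p : ℕ → ℕ) : ℕ :=
  ((Finset.range k).filter (fun i => gtFr M tsm E (p i) (p (i + 1)))).card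

/-- Clamped version of `f`: consecutive increments are capped at `M - 1`. -/
def gAux (M : ℤ) (f : ℕ → ℤ) : ℕ → ℤ
  | 0 => f 0
  | (i+1) => gAux M f i + min (f (i+1) - f i) (M-1)

lemma gAux_step (M : ℤ) (f : ℕ → ℤ) (i : ℕ) :
    gAux M f (i+1) = gAux M f i + min (f (i+1) - f i) (M-1) := rfl

lemma gAux_step_bounds {M : ℤ} (hM : 1 ≤ M) {f : ℕ → ℤ} {n : ℕ}
    (hfm : ∀ i : ℕ, 1 ≤ i → i < n → f i ≤ f (i+1)) {i : ℕ} (h1 : 1 ≤ i) (h2 : i < n) :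
    0 ≤ gAux M f (i+1) - gAux M f i ∧ gAux M f (i+1) - gAux M f i ≤ M - 1 := by
  have := hfm i h1 h2
  rw [gAux_step]
  omega

lemma gAux_interval {M : ℤ} (hM : 1 ≤ M) {f : ℕ → ℤ} {n : ℕ}
    (hfm : ∀ i : ℕ, 1 ≤ i → i < n → f i ≤ f (i+1)) {u v : ℕ}
    (hu : 1 ≤ u) (huv : u ≤ v) (hv : v ≤ n) :
    0 ≤ gAux M f v - gAux M f u ∧ gAux M f v - gAux M f u ≤ f v - f u ∧
      min (f v - f u) (M - 1) ≤ gAux M f v - gAux M f u := by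
  induction v, huv using Nat.le_induction with
  | base => omega
  | succ v hv' ih =>
    have h1 : (1:ℕ) ≤ v := le_trans hu hv'
    have hfv := hfm v h1 (by omega)
    obtain ⟨a1, a2, a3⟩ := ih (by omega)
    rw [gAux_step]
    omega

lemma gAux_find {M : ℤ} (hM : 1 ≤ M) {f : ℕ → ℤ} {t s : ℕ}
    (ht : t ≤ s) (hbig : M ≤ gAux M f s - gAux M f t) :
    ∃ w : ℕ, t ≤ w ∧ w + 1 ≤ s ∧ gAux M f w - gAux M f t ≤ M - 1 ∧
      M ≤ gAux M f (w+1) - gAux M f t := by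
  induction s with
  | zero =>
    interval_cases t
    omega
  | succ s ih =>
    rcases Nat.lt_or_ge t (s+1) with hts | hts
    · rcases le_or_gt M (gAux M f s - gAux M f t) with hb | hb
      · obtain ⟨w, hw1, hw2, hw3, hw4⟩ := ih (by omega) hb
        exact ⟨w, hw1, by omega, hw3, hw4⟩
      · exact ⟨s, by omega, by omega, by omega, hbig⟩
    · have : t = s + 1 := by omega
      subst this
      omega

theorem realizable_exists_weaklySat (M : ℤ) (hM : 1 ≤ M) (n : ℕ) (E : Finset WEdge)
    (hG : InGraph n E) (hW : WtBounded M E) (ts : ℕ → ℝ) (h : Realizes n E ts) :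
    ∃ tsm : ℕ → ℤ, TSM M n tsm ∧ WeaklySat M E tsm := by
  classical
  obtain ⟨hmono, hsat⟩ := h
  have hfm : ∀ i : ℕ, 1 ≤ i → i < n → ⌊ts i⌋ ≤ ⌊ts (i+1)⌋ := by
    intro i h1 h2
    exact Int.floor_le_floor (hmono i (i+1) h1 (by omega) (by omega))
  set g : ℕ → ℤ := gAux M (fun v => ⌊ts v⌋) with hg
  have hM0 : 0 < M := by omega
  have hdt : ∀ u v : ℕ, dtsm M (fun v => g v % M) u v = (g v - g u) % M := by
    intro u v
    simp only [dtsm]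
    rw [← Int.sub_emod]
  have hdt' : ∀ u v : ℕ, 0 ≤ g v - g u → g v - g u ≤ M - 1 →
      dtsm M (fun v => g v % M) u v = g v - g u := by
    intro u v h1 h2
    rw [hdt]
    exact Int.emod_eq_of_lt h1 (by omega)
  have hedge : ∀ e ∈ E, ⌊ts e.tgt⌋ - ⌊ts e.src⌋ ≤ e.wt := by
    intro e he
    have hs := hsat e he
    have h1 : ts e.tgt - ts e.src ≤ (e.wt : ℝ) := by
      unfold satEdge at hs
      split at hs <;> linarith
    have h2 : ts e.tgt ≤ ts e.src + (e.wt : ℝ) := by linarith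
    have h3 := Int.floor_le_floor h2
    rw [Int.floor_add_intCast] at h3
    omega
  have hgiv : ∀ u v : ℕ, 1 ≤ u → u ≤ v → v ≤ n →
      0 ≤ g v - g u ∧ g v - g u ≤ ⌊ts v⌋ - ⌊ts u⌋ ∧
        min (⌊ts v⌋ - ⌊ts u⌋) (M - 1) ≤ g v - g u := by
    intro u v hu huv hv
    exact gAux_interval hM hfm hu huv hv
  refine ⟨fun v => g v % M, ?_, ?_⟩
  · intro v _ _
    exact ⟨Int.emod_nonneg _ (by omega), Int.emod_lt_of_pos _ hM0⟩
  · intro e he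
    obtain ⟨hs1, hs2, ht1, ht2⟩ := hG e he
    obtain ⟨hwbl, hwbr⟩ : -(M-1) ≤ e.wt ∧ e.wt ≤ M - 1 := abs_le.mp (hW e he)
    have hwt := hedge e he
    constructor
    · -- forward edge
      intro hst
      obtain ⟨hiv1, hiv2, hiv3⟩ := hgiv e.src e.tgt hs1 hst ht2
      have hgle : g e.tgt - g e.src ≤ M - 1 := by omega
      constructor
      · rintro ⟨w1, w2, hw1, hw2, hw3, hw4⟩
        have h1 : (1:ℕ) ≤ w1 := le_trans hs1 hw1
        obtain ⟨i1, _, _⟩ := hgiv e.src w1 hs1 hw1 (by omega)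
        obtain ⟨i2, _, _⟩ := hgiv w1 w2 h1 (le_of_lt hw2) (le_trans hw3 ht2)
        obtain ⟨i3, _, _⟩ := hgiv w2 e.tgt (by omega) hw3 ht2
        rw [hdt' e.src w1 i1 (by omega), hdt' w1 w2 i2 (by omega)] at hw4
        omega
      · rw [hdt' e.src e.tgt hiv1 hgle]
        omega
    · -- backward edge
      intro hts
      obtain ⟨hiv1, hiv2, hiv3⟩ := hgiv e.tgt e.src ht1 (le_of_lt hts) hs2
      rcases le_or_gt (g e.src - g e.tgt) (M - 1) with hle | hlt
      · right
        rw [hdt' e.tgt e.src hiv1 hle]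
        omega
      · left
        obtain ⟨w, hw1, hw2, hw3, hw4⟩ :=
          gAux_find (f := fun v => ⌊ts v⌋) hM (le_of_lt hts) (by rw [← hg]; omega)
        rw [← hg] at hw3 hw4
        have h1w : (1:ℕ) ≤ w := le_trans ht1 hw1
        obtain ⟨iw1, _, _⟩ := hgiv e.tgt w ht1 hw1 (by omega)
        have hstep := gAux_step_bounds hM hfm (n := n) h1w (show w < n by omega)
        rw [← hg] at hstep
        refine ⟨w, w+1, hw1, by omega, hw2, ?_⟩
        rw [hdt' e.tgt w iw1 hw3, hdt' w (w+1) hstep.1 hstep.2]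
        omega
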